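/- Let (Γ₁, Γ₂, τ) be a Belavin–Drinfeld triple of type A_{n−1}. If α_{i_1},…,α_{i_m}, α_{j_1},…,α_{j_m} ∈ Γ₁ satisfy Σ_{k=1}^m (τα_{i_k} − α_{i_k}) = Σ_{k=1}^m (τα_{j_k} − α_{j_k}) in ℂⁿ, then there is a permutation ρ ∈ S_m with i_k = j_{ρ(k)} for all k. -/

import Mathlib

namespace GGS

open Finset
open scoped Classical

noncomputable section

/-- `n × n` complex matrices, `Mat_n(ℂ)`. -/
abbrev MatN (n : ℕ) := Matrix (Fin n) (Fin n) ℂ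
/-- `Mat_n(ℂ) ⊗ Mat_n(ℂ)`, realized as matrices indexed by pairs. -/
abbrev MatT (n : ℕ) := Matrix (Fin n × Fin n) (Fin n × Fin n) ℂ
/-- `Mat_n(ℂ)^{⊗3}`. -/
abbrev MatT3 (n : ℕ) := Matrix (Fin n × Fin n × Fin n) (Fin n × Fin n × Fin n) ℂ

/-- Matrix unit `E_{ij}` (ℕ-indices; `0` if out of range). -/
def E (n i j : ℕ) : MatN n := fun a b => if (a : ℕ) = i ∧ (b : ℕ) = j then 1 else 0

/-- Tensor (Kronecker) product of two `n × n` matrices. -/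
def tens {n : ℕ} (A B : MatN n) : MatT n := fun p q => A p.1 q.1 * B p.2 q.2

/-- `M₂₁` : swap of the two tensor factors. -/
def swap21 {n : ℕ} (M : MatT n) : MatT n := fun p q => M (p.2, p.1) (q.2, q.1)

/-- The permutation (Casimir) element `P = Σ E_{ij} ⊗ E_{ji}`. -/
def Pm (n : ℕ) : MatT n := ∑ i ∈ range n, ∑ j ∈ range n, tens (E n i j) (E n j i)

/-- `P⁰ = Σ E_{ii} ⊗ E_{ii}`. -/
def P0 (n : ℕ) : MatT n := ∑ i ∈ range n, tens (E n i i) (E n i i)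

/-- `M₁₂ = M ⊗ 1`. -/
def lift12 {n : ℕ} (M : MatT n) : MatT3 n :=
  fun p q => M (p.1, p.2.1) (q.1, q.2.1) * (if p.2.2 = q.2.2 then 1 else 0)

/-- `M₁₃`. -/
def lift13 {n : ℕ} (M : MatT n) : MatT3 n :=
  fun p q => M (p.1, p.2.2) (q.1, q.2.2) * (if p.2.1 = q.2.1 then 1 else 0)

/-- `M₂₃ = 1 ⊗ M`. -/
def lift23 {n : ℕ} (M : MatT n) : MatT3 n :=
  fun p q => M (p.2.1, p.2.2) (q.2.1, q.2.2) * (if p.1 = q.1 then 1 else 0)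

/-- The quantum Yang–Baxter equation `R₁₂R₁₃R₂₃ = R₂₃R₁₃R₁₂`. -/
def QYBE {n : ℕ} (M : MatT n) : Prop :=
  lift12 M * lift13 M * lift23 M = lift23 M * lift13 M * lift12 M

/-- The Hecke relation `(PR − q)(PR + q⁻¹) = 0`. -/
def Hecke {n : ℕ} (q : ℝ) (M : MatT n) : Prop :=
  (Pm n * M - (q : ℂ) • (1 : MatT n)) * (Pm n * M + (q : ℂ)⁻¹ • (1 : MatT n)) = 0

/-- Standard basis vector `e_i` of `ℂⁿ` (as a function on indices). -/
def evec (i : ℕ) : ℕ → ℂ := fun k => if k = i then 1 else 0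
/-- The root vector `e_i − e_j`. -/
def rvec (i j : ℕ) : ℕ → ℂ := evec i - evec j
/-- The simple root `α_i = e_i − e_{i+1}` (0-based indexing). -/
def svec (i : ℕ) : ℕ → ℂ := rvec i (i + 1)
/-- The inner product on `ℂⁿ` for which `(e_i)` is orthonormal (restricted to real vectors). -/
def ipn (n : ℕ) (x y : ℕ → ℂ) : ℂ := ∑ k ∈ range n, x k * y k

/-- A Belavin–Drinfeld triple of type `A_{n−1}`; simple roots are indexed `0,…,n−2`
(0-based: index `i` stands for `α_i = e_i − e_{i+1}`). -/
structure BDTriple (n : ℕ) where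
  Γ1 : Finset ℕ
  Γ2 : Finset ℕ
  τ : ℕ → ℕ
  mem1 : ∀ i ∈ Γ1, i + 1 < n
  mem2 : ∀ i ∈ Γ2, i + 1 < n
  bij : Set.BijOn τ ↑Γ1 ↑Γ2
  isometry : ∀ i ∈ Γ1, ∀ j ∈ Γ1, ipn n (svec (τ i)) (svec (τ j)) = ipn n (svec i) (svec j)
  nilp : ∀ i ∈ Γ1, ∃ k ≥ 1, τ^[k] i ∉ Γ1

variable {n : ℕ}

/-- The positive root `e_i − e_j` (`i < j`) lies in `Γ̃₁` (the positive part of `Span Γ₁`). -/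
def SpanRoot (T : BDTriple n) (i j : ℕ) : Prop :=
  i < j ∧ ∀ k, i ≤ k → k < j → k ∈ T.Γ1

/-- `q = τ(p)` for positive roots, via the additive extension of `τ` to `Γ̃₁`. -/
def tauStep (T : BDTriple n) (p q : ℕ × ℕ) : Prop :=
  SpanRoot T p.1 p.2 ∧ q.1 < q.2 ∧ rvec q.1 q.2 = ∑ k ∈ Finset.Ico p.1 p.2, svec (T.τ k)

/-- `q = τᵏ(p)`. -/
def precK (T : BDTriple n) : ℕ → ℕ × ℕ → ℕ × ℕ → Prop
  | 0, p, q => p = q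
  | k + 1, p, q => ∃ r, tauStep T p r ∧ precK T k r q

/-- `p ≺ q`, i.e. `q = τᵏ p` for some `k ≥ 1`. -/
def prec (T : BDTriple n) (p q : ℕ × ℕ) : Prop := ∃ k, precK T (k + 1) p q

/-- `p ≺← q` : `q = τᵏ p` and `τᵏ` reverses orientation on `p`. -/
def RevOri (T : BDTriple n) (p q : ℕ × ℕ) : Prop :=
  ∃ k, precK T (k + 1) p q ∧ T.τ^[k + 1] p.1 = q.2 - 1

/-- `p ≺→ q` : `q = τᵏ p` and `τᵏ` preserves orientation on `p`. -/
def PresOri (T : BDTriple n) (p q : ℕ × ℕ) : Prop :=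
  ∃ k, precK T (k + 1) p q ∧ T.τ^[k + 1] p.1 = q.1

/-- `sign(α,β)` : `(−1)^{1−|α|}` in the orientation-reversing case, `1` otherwise. -/
def sgn (T : BDTriple n) (p q : ℕ × ℕ) : ℂ :=
  if RevOri T p q then (-1 : ℂ) ^ (p.2 - p.1 - 1) else 1

/-- Sum over all pairs of (would-be) positive roots with indices `< n`. -/
def sumRoots (n : ℕ) (f : ℕ × ℕ → ℕ × ℕ → MatT n) : MatT n :=
  ∑ i ∈ range n, ∑ j ∈ range n, ∑ k ∈ range n, ∑ l ∈ range n, f (i, j) (k, l)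

/-- `a = Σ_{α≺β} sign(α,β) (e_{−α} ⊗ e_β − e_β ⊗ e_{−α})`. -/
def aMat (T : BDTriple n) : MatT n :=
  sumRoots n fun p q =>
    if prec T p q then
      sgn T p q • (tens (E n p.2 p.1) (E n q.1 q.2) - tens (E n q.1 q.2) (E n p.2 p.1))
    else 0

/-- `r_s = ½ P⁰ + Σ_{α>0} e_{−α} ⊗ e_α`. -/
def rsMat (n : ℕ) : MatT n :=
  (1 / 2 : ℂ) • P0 n +
    ∑ i ∈ range n, ∑ j ∈ range n, if i < j then tens (E n j i) (E n i j) else 0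

/-- `ε = a r_s + r_s a + a²`. -/
def epsMat (T : BDTriple n) : MatT n :=
  aMat T * rsMat n + rsMat n * aMat T + aMat T * aMat T

/-- Entry of a tensor-square matrix, with ℕ indices. -/
def entry (M : MatT n) (a b c d : ℕ) : ℂ :=
  if h : a < n ∧ b < n ∧ c < n ∧ d < n then
    M (⟨a, h.1⟩, ⟨b, h.2.1⟩) (⟨c, h.2.2.1⟩, ⟨d, h.2.2.2⟩)
  else 0

/-- The coefficient of `e_β ⊗ e_{−α}` in `M` (here `p = α`, `q = β`). -/
def coeffBA (M : MatT n) (p q : ℕ × ℕ) : ℂ := entry M q.1 p.2 q.2 p.1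

/-- `q^z = exp(z · ln q)`. -/
def qpow (q : ℝ) (z : ℂ) : ℂ := Complex.exp (z * (Real.log q : ℂ))

/-- The coefficients `K_{α,β}`. -/
def Kc (T : BDTriple n) (p q : ℕ × ℕ) : ℂ :=
  (if p.2 = q.1 then (1 / 2 : ℂ) else 0) - (if q.2 = p.1 then (1 / 2 : ℂ) else 0)
    + (if ∃ g : ℕ × ℕ, prec T p g ∧ prec T g q ∧ p.2 = g.1 then 1 else 0)
    - (if ∃ g : ℕ × ℕ, prec T p g ∧ prec T g q ∧ g.2 = p.1 then 1 else 0)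
    + (if RevOri T p q then 1 - ((p.2 - p.1 : ℕ) : ℂ) else 0)

/-- `Jⁱ = 1 + (q − q⁻¹) Σ_{β = τⁱα} sign(α,β) q^{K_{α,β}} e_β ⊗ e_{−α}`. -/
def Jlevel (q : ℝ) (T : BDTriple n) (i : ℕ) : MatT n :=
  1 + sumRoots n fun p r =>
    if precK T i p r then
      (((q : ℂ) - (q : ℂ)⁻¹) * sgn T p r * qpow q (Kc T p r)) • tens (E n r.1 r.2) (E n p.2 p.1)
    else 0

/-- `J = J¹ J² ⋯` (levels beyond the maximal power of `τ` contribute the identity). -/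
def Jmat (q : ℝ) (T : BDTriple n) : MatT n :=
  ((List.range n).map fun i => Jlevel q T (i + 1)).prod

/-- The standard Drinfeld–Jimbo `R`-matrix `R_s`. -/
def RsQ (n : ℕ) (q : ℝ) : MatT n :=
  (q : ℂ) • P0 n
    + (∑ i ∈ range n, ∑ j ∈ range n, if i ≠ j then tens (E n i i) (E n j j) else 0)
    + ((q : ℂ) - (q : ℂ)⁻¹) •
        (∑ i ∈ range n, ∑ j ∈ range n, if j < i then tens (E n i j) (E n j i) else 0)

/-- `e_{−α} ∧_c e_β = q^{−c} e_{−α} ⊗ e_β − q^c e_β ⊗ e_{−α}` (`p = α`, `r = β`). -/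
def wedgeC {n : ℕ} (q : ℝ) (c : ℂ) (p r : ℕ × ℕ) : MatT n :=
  qpow q (-c) • tens (E n p.2 p.1) (E n r.1 r.2) - qpow q c • tens (E n r.1 r.2) (E n p.2 p.1)

/-- `R̄_GGS = R_s + (q−q⁻¹) Σ_{α≺β} sign(α,β) e_{−α} ∧_{−sign(α,β) ε_{α,β}} e_β`. -/
def RbarGGS (q : ℝ) (T : BDTriple n) : MatT n :=
  RsQ n q + ((q : ℂ) - (q : ℂ)⁻¹) •
    sumRoots n fun p r =>
      if prec T p r then
        sgn T p r • wedgeC q (-(sgn T p r) * coeffBA (epsMat T) p r) p r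
      else 0

/-- `R̄_J = J⁻¹ R_s J₂₁`. -/
def RbarJ (q : ℝ) (T : BDTriple n) : MatT n :=
  (Jmat q T)⁻¹ * RsQ n q * swap21 (Jmat q T)

/-- `q^{r⁰}` for a diagonal⊗diagonal `r⁰`. -/
def qr0 (n : ℕ) (q : ℝ) (r0 : ℕ → ℕ → ℂ) : MatT n :=
  ∑ i ∈ range n, ∑ j ∈ range n, qpow q (r0 i j) • tens (E n i i) (E n j j)

/-- `R_GGS = q^{r⁰} R̄_GGS q^{r⁰}`. -/
def RGGS (q : ℝ) (T : BDTriple n) (r0 : ℕ → ℕ → ℂ) : MatT n :=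
  qr0 n q r0 * RbarGGS q T * qr0 n q r0

/-- `R_J = q^{r⁰} R̄_J q^{r⁰}`. -/
def RJ (q : ℝ) (T : BDTriple n) (r0 : ℕ → ℕ → ℂ) : MatT n :=
  qr0 n q r0 * RbarJ q T * qr0 n q r0

/-- `r⁰ ∈ 𝔥 ∧ 𝔥`, i.e. the coefficient matrix is antisymmetric. -/
def Antisym (n : ℕ) (r0 : ℕ → ℕ → ℂ) : Prop := ∀ i < n, ∀ j < n, r0 i j = -r0 j i

/-- The Belavin–Drinfeld compatibility equations
`((α − τα) ⊗ 1) r⁰ = ½ ((α + τα) ⊗ 1) P⁰` for all `α ∈ Γ₁`, written componentwise. -/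
def Compat (T : BDTriple n) (r0 : ℕ → ℕ → ℂ) : Prop :=
  ∀ s ∈ T.Γ1, ∀ j < n,
    r0 s j - r0 (s + 1) j - r0 (T.τ s) j + r0 (T.τ s + 1) j
      = (1 / 2 : ℂ) *
        ((if j = s then 1 else 0) - (if j = s + 1 then 1 else 0)
          + (if j = T.τ s then 1 else 0) - (if j = T.τ s + 1 then 1 else 0))

/-- `a₊ⁱ` : the part of `a₊` supported on pairs with `β = τⁱα`. -/
def aPlusLev (T : BDTriple n) (i : ℕ) : MatT n :=
  sumRoots n fun p r =>
    if precK T i p r then (-(sgn T p r)) • tens (E n r.1 r.2) (E n p.2 p.1) else 0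

/-- `a₊ = Σ_{α≺β} (−sign(α,β)) e_β ⊗ e_{−α}`. -/
def aPlus (T : BDTriple n) : MatT n :=
  sumRoots n fun p r =>
    if prec T p r then (-(sgn T p r)) • tens (E n r.1 r.2) (E n p.2 p.1) else 0

/-- `a₋ = Σ_{α≺β} sign(α,β) e_{−α} ⊗ e_β`. -/
def aMinus (T : BDTriple n) : MatT n :=
  sumRoots n fun p r =>
    if prec T p r then sgn T p r • tens (E n p.2 p.1) (E n r.1 r.2) else 0

/-- `P₊ = Σ_{i<j} E_{ij}⊗E_{ji} + ½P⁰`. -/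
def PPlus (n : ℕ) : MatT n :=
  (∑ i ∈ range n, ∑ j ∈ range n, if i < j then tens (E n i j) (E n j i) else 0)
    + (1 / 2 : ℂ) • P0 n

/-- `P₋ = Σ_{i>j} E_{ij}⊗E_{ji} + ½P⁰`. -/
def PMinus (n : ℕ) : MatT n :=
  (∑ i ∈ range n, ∑ j ∈ range n, if j < i then tens (E n i j) (E n j i) else 0)
    + (1 / 2 : ℂ) • P0 n

/-- The matrix `Σ_{i≥j} a₊ⁱa₊ʲ − Σ_{i<j} a₊ⁱa₊ʲ + a₊P₋ + a₋P₊ + P₊a₊ + a₊a₋ − a₋a₊`. -/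
def Mmat (T : BDTriple n) : MatT n :=
  (∑ i ∈ range n, ∑ j ∈ range n, if j ≤ i then aPlusLev T (i + 1) * aPlusLev T (j + 1) else 0)
    - (∑ i ∈ range n, ∑ j ∈ range n, if i < j then aPlusLev T (i + 1) * aPlusLev T (j + 1) else 0)
    + aPlus T * PMinus n + aMinus T * PPlus n + PPlus n * aPlus T
    + aPlus T * aMinus T - aMinus T * aPlus T

/-- `L_{α,β}` : `½` if `α ⋖ β`, `−½` if `α ⋗ β`, `0` otherwise. -/
def Lc (p r : ℕ × ℕ) : ℂ :=
  if p.2 = r.1 then 1 / 2 else if r.2 = p.1 then -(1 / 2) else 0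

/-- The part of `M` (viewed on the basis `e_{τα} ⊗ e_{−α}`, `α ∈ Γ̃₁`) supported on
pairs with `α ⋗ τα`. -/
def partGtr (T : BDTriple n) (M : MatT n) : MatT n :=
  sumRoots n fun p r =>
    if tauStep T p r ∧ r.2 = p.1 then coeffBA M p r • tens (E n r.1 r.2) (E n p.2 p.1) else 0

/-- The part of `M` (viewed on the basis `e_{−α} ⊗ e_{τα}`, `α ∈ Γ̃₁`) supported on
pairs with `α ⋖ τα`. -/
def partLess21 (T : BDTriple n) (M : MatT n) : MatT n :=
  sumRoots n fun p r =>
    if tauStep T p r ∧ p.2 = r.1 then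
      entry M p.2 r.1 p.1 r.2 • tens (E n p.2 p.1) (E n r.1 r.2)
    else 0
/-! The partial sum of the first `s + 1` coordinates of a combination of simple roots `α_t` is
the coefficient of `α_s`. Hence the hypothesis says that the multisets `I = {i_k}` and
`J = {j_k}` satisfy `τ(I) - I = τ(J) - J` as multiplicity functions. So the difference of
multiplicities `I - J` vanishes off `Γ₁` and, `τ` being injective on `Γ₁`, is invariant under `τ`
there. By nilpotency every `τ`-orbit leaves `Γ₁`, so `I = J`. -/

theorem sum_range_succ_svec_apply (t s : ℕ) :
    ∑ u ∈ range (s + 1), svec t u = if t = s then 1 else 0 := by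
  simp only [svec, rvec, evec, Pi.sub_apply, sum_sub_distrib, sum_ite_eq', mem_range]
  split_ifs <;> first | omega | simp

theorem sum_range_succ_multiset_sum_svec_apply (S : Multiset ℕ) (s : ℕ) :
    ∑ u ∈ range (s + 1), (S.map svec).sum u = S.count s := by
  induction S using Multiset.induction_on with
  | empty => simp
  | cons t S ih =>
    simp only [Multiset.map_cons, Multiset.sum_cons, Pi.add_apply, sum_add_distrib, ih,
      sum_range_succ_svec_apply, Multiset.count_cons]
    obtain rfl | hts := eq_or_ne t s
    · simp [add_comm]
    · simp [hts, hts.symm]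

theorem sum_range_succ_sum_svec_sub_apply {ι : Type*} [Fintype ι] (f : ι → ℕ) (τ : ℕ → ℕ)
    (s : ℕ) :
    ∑ u ∈ range (s + 1), (∑ k, (svec (τ (f k)) - svec (f k))) u
      = ((univ.val.map f).map τ).count s - (univ.val.map f).count s := by
  have hsum : ∀ g : ι → ℕ, ∑ k, svec (g k) = ((univ.val.map g).map svec).sum :=
    fun g => by rw [Multiset.map_map]; rfl
  rw [sum_sub_distrib, hsum f, hsum fun k => τ (f k), ← Function.comp_def τ f, ← Multiset.map_map]
  simp only [Pi.sub_apply, sum_sub_distrib, sum_range_succ_multiset_sum_svec_apply]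

section NilpotentMap

variable {α : Type*} {Γ : Set α} {τ : α → α}

theorem eq_zero_of_invariant_of_nilpotent {M : Type*} [Zero M] {d : α → M}
    (hout : ∀ a ∉ Γ, d a = 0) (hstep : ∀ a ∈ Γ, d (τ a) = d a)
    (hnil : ∀ a ∈ Γ, ∃ k, τ^[k] a ∉ Γ) (a : α) : d a = 0 := by
  have hiter : ∀ k a, τ^[k] a ∉ Γ → d a = 0 := by
    intro k
    induction k with
    | zero => exact hout
    | succ k ih =>
      intro a ha
      by_cases hΓ : a ∈ Γ
      · rw [← hstep a hΓ]
        exact ih _ (by rwa [Function.iterate_succ_apply] at ha)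
      · exact hout a hΓ
  by_cases hΓ : a ∈ Γ
  · obtain ⟨k, hk⟩ := hnil a hΓ
    exact hiter k a hk
  · exact hout a hΓ

variable [DecidableEq α]

theorem count_map_apply_of_injOn (hτ : Set.InjOn τ Γ) {A : Multiset α} (hA : ∀ a ∈ A, a ∈ Γ)
    {t : α} (ht : t ∈ Γ) : (A.map τ).count (τ t) = A.count t := by
  by_cases htA : t ∈ A
  · exact Multiset.count_map_eq_count τ A (hτ.mono fun a ha => hA a ha) t htA
  · rw [Multiset.count_eq_zero_of_notMem htA, Multiset.count_eq_zero, Multiset.mem_map]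
    rintro ⟨a, haA, hat⟩
    exact htA (hτ (hA a haA) ht hat ▸ haA)

theorem multiset_eq_of_count_map_sub_count_eq (hτ : Set.InjOn τ Γ)
    (hnil : ∀ a ∈ Γ, ∃ k, τ^[k] a ∉ Γ) {A B : Multiset α} (hA : ∀ a ∈ A, a ∈ Γ)
    (hB : ∀ b ∈ B, b ∈ Γ)
    (h : ∀ s, ((A.map τ).count s : ℤ) - A.count s = (B.map τ).count s - B.count s) :
    A = B := by
  suffices hd : ∀ s, (A.count s : ℤ) - B.count s = 0 by
    ext s
    have := hd s
    omega
  refine eq_zero_of_invariant_of_nilpotent (fun s hs => ?_) (fun t ht => ?_) hnil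
  · rw [Multiset.count_eq_zero.2 fun h => hs (hA s h),
      Multiset.count_eq_zero.2 fun h => hs (hB s h)]
    simp
  · have := h (τ t)
    rw [count_map_apply_of_injOn hτ hA ht, count_map_apply_of_injOn hτ hB ht] at this
    omega

end NilpotentMap

theorem exists_perm_eq_comp_of_map_univ_eq {ι β : Type*} [Fintype ι] {f g : ι → β}
    (h : univ.val.map f = univ.val.map g) : ∃ σ : Equiv.Perm ι, ∀ k, f k = g (σ k) := by
  have hfib : ∀ b, Nonempty ({k // f k = b} ≃ {k // g k = b}) := fun b => by
    rw [← Fintype.card_eq, Fintype.card_subtype, Fintype.card_subtype]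
    simpa [Multiset.count_map, Finset.card, eq_comm] using congrArg (Multiset.count b) h
  exact ⟨Equiv.ofFiberEquiv fun b => (hfib b).some, fun k => (Equiv.ofFiberEquiv_map _ k).symm⟩

theorem stmt_4_general {n m : ℕ} (T : BDTriple n)
    (i j : Fin m → ℕ) (hi : ∀ k, i k ∈ T.Γ1) (hj : ∀ k, j k ∈ T.Γ1)
    (heq : ∑ k, (svec (T.τ (i k)) - svec (i k)) = ∑ k, (svec (T.τ (j k)) - svec (j k))) :
    ∃ ρ : Equiv.Perm (Fin m), ∀ k, i k = j (ρ k) := by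
  have hcount : ∀ s, (((univ.val.map i).map T.τ).count s : ℤ) - (univ.val.map i).count s
      = ((univ.val.map j).map T.τ).count s - (univ.val.map j).count s := fun s => by
    have := congrArg (fun v => ∑ u ∈ range (s + 1), v u) heq
    simp only [sum_range_succ_sum_svec_sub_apply] at this
    exact_mod_cast this
  refine exists_perm_eq_comp_of_map_univ_eq
    (multiset_eq_of_count_map_sub_count_eq T.bij.injOn (fun a ha => ?_) ?_ ?_ hcount)
  · obtain ⟨k, -, hk⟩ := T.nilp a ha
    exact ⟨k, hk⟩
  · simpa using hi
  · simpa using hj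

/-- if `Σ_k (τα_{i_k} − α_{i_k}) = Σ_k (τα_{j_k} − α_{j_k})` then the index
sequences agree up to a permutation. -/
theorem stmt_4 {n m : ℕ} (hn : 2 ≤ n) (T : BDTriple n)
    (i j : Fin m → ℕ) (hi : ∀ k, i k ∈ T.Γ1) (hj : ∀ k, j k ∈ T.Γ1)
    (heq : ∑ k, (svec (T.τ (i k)) - svec (i k)) = ∑ k, (svec (T.τ (j k)) - svec (j k))) :
    ∃ ρ : Equiv.Perm (Fin m), ∀ k, i k = j (ρ k) :=
  stmt_4_general T i j hi hj heq

end
end GGS
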